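/- arXiv:2605.21455 — 2 statements merged into one kernel-verified Lean document; each statement's English description precedes it below -/
import Mathlib

section
/- Let T : 𝒳 × {m,f} → 𝒳 be a (possibly stochastic) manipulation satisfying the consistency condition T(T(X, g₀), g₁) =_d T(X, g₁) (equality in distribution) for all g₀, g₁ ∈ {m, f}. For a measurable h : 𝒳 → ℝ and weight w ∈ [0,1], define the marginalized predictor h_T(x) = w·h(T(x, m)) + (1 − w)·h(T(x, f)). Then bias_T(h_T) = E[h_T(T(X,m)) − h_T(T(X,f))] = 0. -/
open MeasureTheory ProbabilityTheory

inductive Gender | m | f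
  deriving DecidableEq

instance : MeasurableSpace Gender := ⊤

/-- **Marginalization eliminates audit bias** (Prop. 3, marginalization case): if
`T(T(X,g₀),g₁) =_d T(X,g₁)`, then the marginalized predictor
`h_T(x) = w·h(T(x,m)) + (1−w)·h(T(x,f))` satisfies `bias_T(h_T) = 0`. -/
theorem marginalization_no_bias
    {Ω : Type*} [MeasurableSpace Ω] {𝒳 : Type*} [MeasurableSpace 𝒳]
    (P : Measure Ω) [IsProbabilityMeasure P]
    (X : Ω → 𝒳) (hX : Measurable X)
    (T : 𝒳 → Gender → 𝒳) (hT : Measurable fun q : 𝒳 × Gender => T q.1 q.2)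
    -- distributional consistency of the manipulation
    (hcons : ∀ g₀ g₁ : Gender,
      P.map (fun ω => T (T (X ω) g₀) g₁) = P.map (fun ω => T (X ω) g₁))
    (h : 𝒳 → ℝ) (hh : Measurable h)
    (w : ℝ) (hw : w ∈ Set.Icc (0 : ℝ) 1)
    -- the marginalized predictor
    (hT' : 𝒳 → ℝ)
    (hhT' : ∀ x, hT' x = w * h (T x Gender.m) + (1 - w) * h (T x Gender.f))
    -- integrability of the relevant compositions
    (hint : ∀ g : Gender, Integrable (fun ω => hT' (T (X ω) g)) P)
    (hint' : ∀ g₀ g₁ : Gender, Integrable (fun ω => h (T (T (X ω) g₀) g₁)) P) :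
    ∫ ω, (hT' (T (X ω) Gender.m) - hT' (T (X ω) Gender.f)) ∂P = 0 := by
  have hTg : ∀ g : Gender, Measurable fun x : 𝒳 => T x g := fun g =>
    hT.comp (measurable_id.prodMk measurable_const)
  have hmeas : ∀ g₀ g₁ : Gender, Measurable fun ω => T (T (X ω) g₀) g₁ :=
    fun g₀ g₁ => (hTg g₁).comp ((hTg g₀).comp hX)
  have key : ∀ g₀ g₁ : Gender,
      ∫ ω, h (T (T (X ω) g₀) g₁) ∂P = ∫ ω, h (T (X ω) g₁) ∂P := by
    intro g₀ g₁
    rw [← integral_map (hmeas g₀ g₁).aemeasurable hh.aestronglyMeasurable,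
      hcons g₀ g₁]
    exact integral_map ((hTg g₁).comp hX).aemeasurable hh.aestronglyMeasurable
  have expand : ∀ g₀ : Gender,
      ∫ ω, hT' (T (X ω) g₀) ∂P
        = w * ∫ ω, h (T (X ω) Gender.m) ∂P
          + (1 - w) * ∫ ω, h (T (X ω) Gender.f) ∂P := by
    intro g₀
    have : (fun ω => hT' (T (X ω) g₀))
        = fun ω => w * h (T (T (X ω) g₀) Gender.m)
          + (1 - w) * h (T (T (X ω) g₀) Gender.f) := by
      funext ω; rw [hhT']
    rw [this, integral_add ((hint' g₀ Gender.m).const_mul w)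
        ((hint' g₀ Gender.f).const_mul (1 - w)),
      integral_const_mul, integral_const_mul, key, key]
  rw [integral_sub (hint Gender.m) (hint Gender.f), expand, expand, sub_self]
end

section
/- Let B be an integrable real random variable and G ∈ {m, f} with B conditionally independent of X given G, where X takes values in 𝒳 and r : 𝒳 → ℛ is measurable. Then E[B | r(X), G = g] = E[B | G = g] almost surely, for g ∈ {m, f}, and consequently E[B | r(X)] = β(f) + (β(m) − β(f)) · P(G = m | r(X)), where β(g) = E[B | G = g]. -/
/-! Conditioning on a discrete `G` splits `Ω` into the fibres `{G = c}`. Conditional independence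
of `B` and `X` given `G` makes `B` and `r ∘ X` independent under each `P[|G = c]`; as `G` is
a.s. constant there, `B` is even independent of `σ(r ∘ X) ⊔ σ(G)` under `P[|G = c]`. Hence, on
each fibre, `E[B | r(X), G]` is the fibre mean `β(c)`. The formula for `E[B | r(X)]` then follows
from the tower property and `β(G) = β(f) + (β(m) - β(f)) 1_{G = m}`. -/

open MeasureTheory ProbabilityTheory

instance : Finite Gender :=
  Finite.of_surjective (fun b : Bool => bif b then Gender.m else Gender.f) fun g => by
    cases g
    exacts [⟨true, rfl⟩, ⟨false, rfl⟩]

open Filter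

namespace ProbabilityTheory

variable {Ω β β' γ : Type*} [MeasurableSpace β] [MeasurableSpace β'] [MeasurableSpace γ]
  {m m₁ m₂ mΩ : MeasurableSpace Ω} {μ : Measure Ω} {s t : Set Ω}

lemma cond_real_apply (hs : MeasurableSet s) (t : Set Ω) :
    μ[|s].real t = (μ.real s)⁻¹ * μ.real (s ∩ t) := by
  rw [measureReal_def, cond_apply hs, ENNReal.toReal_mul, ENNReal.toReal_inv, measureReal_def,
    measureReal_def]

lemma setIntegral_cond (hs : MeasurableSet s) (t : Set Ω) (f : Ω → ℝ) :
    ∫ x in t, f x ∂μ[|s] = (μ.real s)⁻¹ * ∫ x in t ∩ s, f x ∂μ := by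
  rw [ProbabilityTheory.cond, Measure.restrict_smul, Measure.restrict_restrict' hs,
    integral_smul_measure, smul_eq_mul, ENNReal.toReal_inv, measureReal_def]

lemma Indep.setIntegral_eq_measureReal_mul_integral [IsProbabilityMeasure μ] {f : Ω → ℝ}
    (hle₁ : m₁ ≤ mΩ) (hle₂ : m₂ ≤ mΩ) (hf : StronglyMeasurable[m₁] f) (hfi : Integrable f μ)
    (hind : Indep m₁ m₂ μ) (ht : MeasurableSet[m₂] t) :
    ∫ x in t, f x ∂μ = μ.real t * ∫ x, f x ∂μ := by
  rw [← setIntegral_condExp hle₂ hfi ht,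
    setIntegral_congr_ae (hle₂ _ ht) ((condExp_indep_eq hle₁ hle₂ hf hind).mono fun _ h _ => h),
    setIntegral_const, smul_eq_mul]

lemma condExp_ae_eq_integral_cond_of_indep [IsFiniteMeasure μ] {f : Ω → ℝ} (hle₁ : m₁ ≤ mΩ)
    (hm : m ≤ mΩ) (hf : StronglyMeasurable[m₁] f) (hfi : Integrable f μ)
    (hs : MeasurableSet[m] s) (hind : Indep m₁ m μ[|s]) :
    μ[f | m] =ᵐ[μ.restrict s] fun _ => ∫ x, f x ∂μ[|s] := by
  by_cases hμs : μ s = 0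
  · simp [Measure.restrict_eq_zero.mpr hμs, EventuallyEq]
  have := cond_isProbabilityMeasure hμs
  refine ae_eq_of_forall_setIntegral_eq_of_sigmaFinite' hm
    (fun _ _ _ => integrable_condExp.restrict.integrableOn)
    (fun _ _ _ => integrableOn_const) (fun t ht _ => ?_)
    stronglyMeasurable_condExp.aestronglyMeasurable aestronglyMeasurable_const
  have hfs : Integrable f μ[|s] := hfi.restrict.smul_measure (ENNReal.inv_ne_top.mpr hμs)
  have hfactor := Indep.setIntegral_eq_measureReal_mul_integral hle₁ hm hf hfs hind ht
  rw [setIntegral_cond (hm _ hs), cond_real_apply (hm _ hs), Set.inter_comm s, mul_assoc]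
    at hfactor
  rw [Measure.restrict_restrict (hm _ ht), setIntegral_condExp hm hfi (ht.inter hs),
    setIntegral_const, smul_eq_mul]
  have hμs' : (μ.real s)⁻¹ ≠ 0 := by simp [measureReal_def, ENNReal.toReal_eq_zero_iff, hμs]
  exact mul_left_cancel₀ hμs' hfactor

lemma condExp_comap_apply_eq_integral_cond [IsFiniteMeasure μ] [MeasurableSingletonClass γ]
    {G : Ω → γ} {f : Ω → ℝ} (hG : Measurable G) (hfi : Integrable f μ) {ω : Ω}
    (hω : μ (G ⁻¹' {G ω}) ≠ 0) :
    μ[f | MeasurableSpace.comap G inferInstance] ω = ∫ x, f x ∂μ[|G ⁻¹' {G ω}] := by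
  have hF : MeasurableSet (G ⁻¹' {G ω}) := hG (measurableSet_singleton _)
  have hconst : ∀ x ∈ G ⁻¹' {G ω}, μ[f | MeasurableSpace.comap G inferInstance] x
      = μ[f | MeasurableSpace.comap G inferInstance] ω :=
    fun _ hx => stronglyMeasurable_condExp.factorsThrough hx
  have hint := setIntegral_condExp hG.comap_le hfi ⟨{G ω}, measurableSet_singleton _, rfl⟩
  rw [setIntegral_congr_fun hF hconst, setIntegral_const, smul_eq_mul] at hint
  have hμF : μ.real (G ⁻¹' {G ω}) ≠ 0 := by
    simp [measureReal_def, ENNReal.toReal_eq_zero_iff, hω]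
  rw [← setIntegral_univ, setIntegral_cond hF, Set.univ_inter, ← hint,
    inv_mul_cancel_left₀ hμF]

lemma IndepFun.prodMk_right_of_ae_eq_const {f : Ω → β} {g : Ω → β'} {G : Ω → γ} {c : γ}
    (h : IndepFun f g μ) (hG : G =ᵐ[μ] fun _ => c) : IndepFun f (fun ω => (g ω, G ω)) μ := by
  refine (h.comp (ψ := fun y => (y, c)) measurable_id (by fun_prop)).congr .rfl ?_
  filter_upwards [hG] with ω hω
  rw [Function.comp_apply, hω]

section CondIndepFun

variable [StandardBorelSpace Ω] [IsFiniteMeasure μ]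

lemma CondIndepFun.congr_left {hm : m ≤ mΩ} {f f' : Ω → β} {g : Ω → β'}
    (h : CondIndepFun m hm f g μ) (hff' : f =ᵐ[μ] f') : CondIndepFun m hm f' g μ := by
  refine Kernel.IndepFun.congr' h (Measure.ae_ae_of_ae_comp ?_) (ae_of_all _ fun _ => .rfl)
  simp_rw [condExpKernel_comp_trim]
  exact hff'

lemma CondIndepFun.indepFun_cond [MeasurableSingletonClass γ] {G : Ω → γ} (hG : Measurable G)
    {f : Ω → β} {g : Ω → β'} (hf : Measurable f) (hg : Measurable g)
    (h : CondIndepFun (MeasurableSpace.comap G inferInstance) hG.comap_le f g μ) (c : γ) :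
    IndepFun f g μ[|G ⁻¹' {c}] := by
  have hF : MeasurableSet (G ⁻¹' {c}) := hG (measurableSet_singleton c)
  by_cases hμF : μ (G ⁻¹' {c}) = 0
  · simp [cond_eq_zero_of_meas_eq_zero hμF, indepFun_iff_measure_inter_preimage_eq_mul]
  rw [indepFun_iff_measure_inter_preimage_eq_mul]
  intro u v hu hv
  have hprod := (condIndepFun_iff_condExp_inter_preimage_eq_mul hf hg).mp h u v hu hv
  have : (ae (μ.restrict (G ⁻¹' {c}))).NeBot := ae_restrict_neBot.mpr hμF
  obtain ⟨ω, hω, hωprod⟩ := ((ae_restrict_mem hF).and (ae_restrict_of_ae hprod)).exists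
  have hω : G ω = c := hω
  have hcond : ∀ S, MeasurableSet S →
      (μ⟦S | MeasurableSpace.comap G inferInstance⟧) ω = μ[|G ⁻¹' {c}].real S := by
    intro S hS
    rw [condExp_comap_apply_eq_integral_cond hG ((integrable_const 1).indicator hS)
      (by rwa [hω]), hω, integral_indicator_const _ hS, smul_eq_mul, mul_one]
  beta_reduce at hωprod
  rw [hcond _ ((hf hu).inter (hg hv)), hcond _ (hf hu), hcond _ (hg hv), measureReal_def,
    measureReal_def, measureReal_def, ← ENNReal.toReal_mul] at hωprod
  exact (ENNReal.toReal_eq_toReal_iff' (measure_ne_top _ _) (by finiteness)).mp hωprod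

theorem condExp_sup_comap_ae_eq_integral_cond [Countable γ] [MeasurableSingletonClass γ]
    {G : Ω → γ} {Y : Ω → β} {f : Ω → ℝ} (hG : Measurable G) (hY : Measurable Y)
    (hf : Integrable f μ)
    (h : CondIndepFun (MeasurableSpace.comap G inferInstance) hG.comap_le f Y μ) :
    μ[f | MeasurableSpace.comap Y inferInstance ⊔ MeasurableSpace.comap G inferInstance]
      =ᵐ[μ] fun ω => ∫ x, f x ∂μ[|G ⁻¹' {G ω}] := by
  obtain ⟨f', hf'm, hff'⟩ : ∃ f', Measurable f' ∧ f =ᵐ[μ] f' :=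
    ⟨hf.1.aemeasurable.mk f, hf.1.aemeasurable.measurable_mk, hf.1.aemeasurable.ae_eq_mk⟩
  have hmean (c : γ) : ∫ x, f x ∂μ[|G ⁻¹' {c}] = ∫ x, f' x ∂μ[|G ⁻¹' {c}] :=
    integral_congr_ae (cond_absolutelyContinuous.ae_le hff')
  simp_rw [hmean]
  refine (condExp_congr_ae hff').trans ?_
  have hm : MeasurableSpace.comap Y inferInstance ⊔ MeasurableSpace.comap G inferInstance ≤ mΩ :=
    sup_le hY.comap_le hG.comap_le
  have hfiber (c : γ) : ∀ᵐ ω ∂μ.restrict (G ⁻¹' {c}),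
      μ[f' | MeasurableSpace.comap Y inferInstance ⊔ MeasurableSpace.comap G inferInstance] ω
        = ∫ x, f' x ∂μ[|G ⁻¹' {G ω}] := by
    have hF : MeasurableSet (G ⁻¹' {c}) := hG (measurableSet_singleton c)
    have hFm : MeasurableSet[MeasurableSpace.comap Y inferInstance ⊔
        MeasurableSpace.comap G inferInstance] (G ⁻¹' {c}) :=
      le_sup_right (a := MeasurableSpace.comap Y inferInstance) _
        ⟨{c}, measurableSet_singleton c, rfl⟩
    have hind : Indep (MeasurableSpace.comap f' inferInstance)
        (MeasurableSpace.comap Y inferInstance ⊔ MeasurableSpace.comap G inferInstance)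
        μ[|G ⁻¹' {c}] := by
      rw [← MeasurableSpace.comap_prodMk]
      exact ((h.congr_left hff').indepFun_cond hG hf'm hY c).prodMk_right_of_ae_eq_const
        (ae_cond_mem hF)
    filter_upwards [condExp_ae_eq_integral_cond_of_indep hf'm.comap_le hm
      (comap_measurable f').stronglyMeasurable (hf.congr hff') hFm hind, ae_restrict_mem hF]
      with ω hω hGω
    rw [hω, hGω]
  have hcover : ⋃ c, G ⁻¹' {c} = Set.univ := by
    rw [← Set.preimage_iUnion, Set.iUnion_of_singleton, Set.preimage_univ]
  have := (ae_restrict_iUnion_iff _ _).mpr hfiber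
  rwa [hcover, Measure.restrict_univ] at this

end CondIndepFun

lemma condExp_const_add_mul_indicator [IsFiniteMeasure μ] (hm : m ≤ mΩ) (hs : MeasurableSet s)
    (a b : ℝ) :
    μ[fun ω => a + b * s.indicator (fun _ => 1) ω | m] =ᵐ[μ] fun ω => a + b * (μ⟦s | m⟧) ω := by
  have hind : Integrable (fun ω => b * s.indicator (fun _ => (1 : ℝ)) ω) μ :=
    ((integrable_const (μ := μ) (1 : ℝ)).indicator hs).const_mul b
  refine (condExp_add (integrable_const a) hind m).trans ?_
  rw [condExp_const hm]
  exact EventuallyEq.rfl.add (condExp_smul b (s.indicator fun _ => (1 : ℝ)) m)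

end ProbabilityTheory


theorem condexp_collapse_general
    {Ω : Type*} [MeasurableSpace Ω] [StandardBorelSpace Ω]
    {𝒳 ℛ : Type*} [MeasurableSpace 𝒳] [MeasurableSpace ℛ]
    (P : Measure Ω) [IsProbabilityMeasure P]
    (X : Ω → 𝒳) (G : Ω → Gender) (B : Ω → ℝ)
    (r : 𝒳 → ℛ)
    (hX : Measurable X) (hG : Measurable G) (hB : Integrable B P)
    (hr : Measurable r)
    -- B is conditionally independent of X given G
    (hCI : CondIndepFun (MeasurableSpace.comap G inferInstance)
      (measurable_iff_comap_le.mp hG) B X P)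
    -- β(g) = E[B | G = g]
    (β : Gender → ℝ) (hβ : ∀ g, β g = ∫ ω, B ω ∂(P[|G ⁻¹' {g}])) :
    (P[B | MeasurableSpace.comap (fun ω => r (X ω)) inferInstance
        ⊔ MeasurableSpace.comap G inferInstance]
      =ᵐ[P] fun ω => β (G ω))
    ∧ (P[B | MeasurableSpace.comap (fun ω => r (X ω)) inferInstance]
      =ᵐ[P] fun ω =>
        β Gender.f + (β Gender.m - β Gender.f)
          * (P⟦G ⁻¹' {Gender.m} | MeasurableSpace.comap (fun ω => r (X ω)) inferInstance⟧) ω) := by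
  have hrX : Measurable fun ω => r (X ω) := hr.comp hX
  have hcollapse : P[B | MeasurableSpace.comap (fun ω => r (X ω)) inferInstance
      ⊔ MeasurableSpace.comap G inferInstance] =ᵐ[P] fun ω => β (G ω) := by
    simp_rw [hβ]
    exact condExp_sup_comap_ae_eq_integral_cond hG hrX hB (hCI.comp measurable_id hr)
  have hβG : (fun ω => β (G ω))
      = fun ω => β Gender.f + (β Gender.m - β Gender.f) * (G ⁻¹' {Gender.m}).indicator 1 ω := by
    funext ω
    cases h : G ω <;> simp [h]
  refine ⟨hcollapse, ?_⟩
  calc P[B | MeasurableSpace.comap (fun ω => r (X ω)) inferInstance]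
      =ᵐ[P] P[P[B | MeasurableSpace.comap (fun ω => r (X ω)) inferInstance
          ⊔ MeasurableSpace.comap G inferInstance] |
          MeasurableSpace.comap (fun ω => r (X ω)) inferInstance] :=
        (condExp_condExp_of_le le_sup_left (sup_le hrX.comap_le hG.comap_le)).symm
    _ =ᵐ[P] P[fun ω => β (G ω) | MeasurableSpace.comap (fun ω => r (X ω)) inferInstance] :=
        condExp_congr_ae hcollapse
    _ =ᵐ[P] _ := by
        rw [hβG]
        exact condExp_const_add_mul_indicator hrX.comap_le (hG (measurableSet_singleton _)) _ _

/-- **Conditional-mean collapse under conditional independence**: if `B ⫫ X | G`, then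
`E[B | r(X), G] = E[B | G]` a.s., and consequently
`E[B | r(X)] = β(f) + (β(m) − β(f)) · P(G = m | r(X))` where `β(g) = E[B | G = g]`. -/
theorem condexp_collapse
    {Ω : Type*} [MeasurableSpace Ω] [StandardBorelSpace Ω] [Nonempty Ω]
    {𝒳 ℛ : Type*} [MeasurableSpace 𝒳] [MeasurableSpace ℛ]
    (P : Measure Ω) [IsProbabilityMeasure P]
    (X : Ω → 𝒳) (G : Ω → Gender) (B : Ω → ℝ)
    (r : 𝒳 → ℛ)
    (hX : Measurable X) (hG : Measurable G) (hB : Integrable B P)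
    (hr : Measurable r)
    -- non-degeneracy: 0 < P(G = m) < 1
    (hGm_pos : 0 < P (G ⁻¹' {Gender.m})) (hGm_lt : P (G ⁻¹' {Gender.m}) < 1)
    -- B is conditionally independent of X given G
    (hCI : CondIndepFun (MeasurableSpace.comap G inferInstance)
      (measurable_iff_comap_le.mp hG) B X P)
    -- β(g) = E[B | G = g]
    (β : Gender → ℝ) (hβ : ∀ g, β g = ∫ ω, B ω ∂(P[|G ⁻¹' {g}])) :
    (P[B | MeasurableSpace.comap (fun ω => r (X ω)) inferInstance
        ⊔ MeasurableSpace.comap G inferInstance]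
      =ᵐ[P] fun ω => β (G ω))
    ∧ (P[B | MeasurableSpace.comap (fun ω => r (X ω)) inferInstance]
      =ᵐ[P] fun ω =>
        β Gender.f + (β Gender.m - β Gender.f)
          * (P⟦G ⁻¹' {Gender.m} | MeasurableSpace.comap (fun ω => r (X ω)) inferInstance⟧) ω) :=
  condexp_collapse_general P X G B r hX hG hB hr hCI β hβ
end
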